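/- arXiv:1609.02420 — 4 statements merged into one kernel-verified Lean document; each statement's English description precedes it below -/
import Mathlib

section
/- Let G be a group, let g ≥ 1, and let x_1, x_2, …, x_{2g} be elements of G satisfying the braid relations x_i x_{i+1} x_i = x_{i+1} x_i x_{i+1} for all 1 ≤ i ≤ 2g−1, and x_i x_j = x_j x_i whenever |i − j| ≥ 2. Then (x_1 x_2 ⋯ x_{2g})^{2g+1} = (x_1 x_2 ⋯ x_{2g−1})^{2g} · (x_{2g} x_{2g−1} ⋯ x_2 x_1) · (x_1 x_2 ⋯ x_{2g}). -/
/-!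
Write `Q = x₁ ⋯ xₙ` and `P = x₁ ⋯ xₙ₋₁`. The braid relations give `Q xᵢ = xᵢ₊₁ Q` for `i < n`,
so moving a descending word `xₙ xₙ₋₁ ⋯ xₙ₋ₖ₊₁` to the right of `Q` lowers all its indices by one.
Together with `Q = P xₙ` this yields `Qᵏ = Pᵏ xₙ xₙ₋₁ ⋯ xₙ₋ₖ₊₁` by induction on `k ≤ n`;
the case `k = n`, multiplied by one more `Q`, is the identity.
-/

namespace BraidChain

variable {G : Type*} [Group G]

structure IsBraidChain (x : ℕ → G) (n : ℕ) : Prop where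
  braid : ∀ i, 1 ≤ i → i < n → x i * x (i + 1) * x i = x (i + 1) * x i * x (i + 1)
  commute : ∀ i j, 1 ≤ i → i + 2 ≤ j → j ≤ n → Commute (x i) (x j)

def prefixProd (x : ℕ → G) (m : ℕ) : G :=
  ((List.range m).map fun i => x (i + 1)).prod

/-- `descProd x b l = x (b + l) * ⋯ * x (b + 1)`. -/
def descProd (x : ℕ → G) (b l : ℕ) : G :=
  ((List.range l).reverse.map fun i => x (b + i + 1)).prod

variable {x : ℕ → G} {n : ℕ}

@[simp]
lemma prefixProd_zero : prefixProd x 0 = 1 := rfl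

lemma prefixProd_succ (m : ℕ) : prefixProd x (m + 1) = prefixProd x m * x (m + 1) := by
  simp [prefixProd, List.range_succ]

@[simp]
lemma descProd_zero (b : ℕ) : descProd x b 0 = 1 := rfl

lemma descProd_succ (b l : ℕ) : descProd x b (l + 1) = x (b + l + 1) * descProd x b l := by
  simp [descProd, List.range_succ]

namespace IsBraidChain

variable (h : IsBraidChain x n)
include h

lemma commute_prefixProd {m j : ℕ} (hmj : m + 2 ≤ j) (hjn : j ≤ n) :
    Commute (x j) (prefixProd x m) := by
  induction m with
  | zero => exact Commute.one_right _
  | succ m ih =>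
    rw [prefixProd_succ]
    exact (ih (by omega)).mul_right (h.commute (m + 1) j (by omega) hmj hjn).symm

lemma prefixProd_mul {m i : ℕ} (hi : 1 ≤ i) (him : i < m) (hmn : m ≤ n) :
    prefixProd x m * x i = x (i + 1) * prefixProd x m := by
  induction m with
  | zero => omega
  | succ m ih =>
    rcases Nat.lt_succ_iff_lt_or_eq.mp him with him' | rfl
    · rw [prefixProd_succ, mul_assoc, ← (h.commute i (m + 1) hi (by omega) hmn).eq,
        ← mul_assoc, ih him' (by omega), mul_assoc]
    · obtain ⟨k, rfl⟩ : ∃ k, i = k + 1 := ⟨i - 1, by omega⟩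
      have hbraid := h.braid (k + 1) hi (by omega)
      have hcomm := h.commute_prefixProd (m := k) (j := k + 2) le_rfl (by omega)
      calc prefixProd x (k + 1 + 1) * x (k + 1)
          = prefixProd x k * (x (k + 1) * x (k + 2) * x (k + 1)) := by
            simp only [prefixProd_succ, mul_assoc]
        _ = x (k + 2) * prefixProd x k * (x (k + 1) * x (k + 2)) := by
            rw [hbraid, hcomm.eq]; simp only [mul_assoc]
        _ = x (k + 1 + 1) * prefixProd x (k + 1 + 1) := by
            simp only [prefixProd_succ, mul_assoc]

lemma descProd_mul_prefixProd {m b l : ℕ} (hblm : b + l < m) (hmn : m ≤ n) :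
    descProd x (b + 1) l * prefixProd x m = prefixProd x m * descProd x b l := by
  induction l with
  | zero => simp
  | succ l ih =>
    rw [descProd_succ, descProd_succ, mul_assoc, ih (by omega), ← mul_assoc,
      show b + 1 + l + 1 = b + l + 1 + 1 by omega,
      ← h.prefixProd_mul (i := b + l + 1) (by omega) (by omega) hmn, mul_assoc]

lemma prefixProd_pow {b k : ℕ} (hbk : b + k = n) :
    prefixProd x n ^ k = prefixProd x (n - 1) ^ k * descProd x b k := by
  induction k generalizing b with
  | zero => simp
  | succ k ih =>
    subst hbk
    have hn : b + (k + 1) - 1 = b + k := by omega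
    rw [pow_succ, ih (b := b + 1) (by omega), hn, mul_assoc,
      h.descProd_mul_prefixProd (by omega) le_rfl, show b + (k + 1) = b + k + 1 by omega,
      prefixProd_succ, descProd_succ, pow_succ]
    simp only [mul_assoc]

end IsBraidChain

end BraidChain

open BraidChain in
theorem chain_braid_identity_general (G : Type*) [Group G] (g : ℕ) (x : ℕ → G)
    (hbraid : ∀ i, 1 ≤ i → i ≤ 2 * g - 1 →
      x i * x (i + 1) * x i = x (i + 1) * x i * x (i + 1))
    (hcomm : ∀ i j, 1 ≤ i → i ≤ 2 * g → 1 ≤ j → j ≤ 2 * g → (i + 2 ≤ j ∨ j + 2 ≤ i) →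
      x i * x j = x j * x i) :
    (((List.range (2 * g)).map fun i => x (i + 1)).prod) ^ (2 * g + 1) =
      (((List.range (2 * g - 1)).map fun i => x (i + 1)).prod) ^ (2 * g) *
        (((List.range (2 * g)).reverse.map fun i => x (i + 1)).prod) *
        (((List.range (2 * g)).map fun i => x (i + 1)).prod) := by
  have h : IsBraidChain x (2 * g) :=
    ⟨fun i hi hin => hbraid i hi (by omega),
      fun i j hi hij hjn => hcomm i j hi (by omega) (by omega) hjn (Or.inl hij)⟩
  have hpow := h.prefixProd_pow (b := 0) (zero_add _)
  simp only [prefixProd, descProd, zero_add] at hpow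
  rw [pow_succ, hpow]

/-- In any group `G`, if `x_1, …, x_{2g}` satisfy the braid relations
`x_i x_{i+1} x_i = x_{i+1} x_i x_{i+1}` for `1 ≤ i ≤ 2g - 1` and `x_i x_j = x_j x_i` for
`|i - j| ≥ 2`, then
`(x_1 ⋯ x_{2g})^{2g+1} = (x_1 ⋯ x_{2g-1})^{2g} · (x_{2g} x_{2g-1} ⋯ x_1) · (x_1 ⋯ x_{2g})`. -/
theorem chain_braid_identity (G : Type*) [Group G] (g : ℕ) (hg : 1 ≤ g) (x : ℕ → G)
    (hbraid : ∀ i, 1 ≤ i → i ≤ 2 * g - 1 →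
      x i * x (i + 1) * x i = x (i + 1) * x i * x (i + 1))
    (hcomm : ∀ i j, 1 ≤ i → i ≤ 2 * g → 1 ≤ j → j ≤ 2 * g → (i + 2 ≤ j ∨ j + 2 ≤ i) →
      x i * x j = x j * x i) :
    (((List.range (2 * g)).map fun i => x (i + 1)).prod) ^ (2 * g + 1) =
      (((List.range (2 * g - 1)).map fun i => x (i + 1)).prod) ^ (2 * g) *
        (((List.range (2 * g)).reverse.map fun i => x (i + 1)).prod) *
        (((List.range (2 * g)).map fun i => x (i + 1)).prod) :=
  chain_braid_identity_general G g x hbraid hcomm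
end

section
/- Let g = 2r with r ≥ 2, and let G_1 = π_g / N(ℬ^g_1). Then for every 1 ≤ k ≤ r the image of the word a_k a_{g+1−k} in G_1 is trivial (i.e., a_k = a_{g+1−k}^{-1} holds in G_1). -/
namespace Paper

/-- The free group `F_g` on the `2g` generators `a_1, b_1, …, a_g, b_g`
(the pair `(i, false)` is `a_{i+1}`, the pair `(i, true)` is `b_{i+1}`). -/
abbrev F (g : ℕ) := FreeGroup (Fin g × Bool)

/-- The generator `a_i` of `F_g`, for `1 ≤ i ≤ g`; by convention `a_i = 1` for out-of-range
indices (in particular `a_{g+1} = 1`). -/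
def a (g i : ℕ) : F g :=
  if h : 1 ≤ i ∧ i ≤ g then FreeGroup.of (⟨i - 1, by omega⟩, false) else 1

/-- The generator `b_i` of `F_g`, for `1 ≤ i ≤ g`. -/
def b (g i : ℕ) : F g :=
  if h : 1 ≤ i ∧ i ≤ g then FreeGroup.of (⟨i - 1, by omega⟩, true) else 1

/-- The word `c_i = b_i⁻¹ ⋯ b_2⁻¹ b_1⁻¹ (a_1 b_1 a_1⁻¹)(a_2 b_2 a_2⁻¹) ⋯ (a_i b_i a_i⁻¹)`,
with `c_0 = 1`. -/
def c (g i : ℕ) : F g :=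
  (((List.range i).reverse.map fun j => (b g (j + 1))⁻¹).prod) *
    (((List.range i).map fun j => a g (j + 1) * b g (j + 1) * (a g (j + 1))⁻¹).prod)

/-- The product `b_i b_{i+1} ⋯ b_j`. -/
def prodb (g i j : ℕ) : F g := ((List.range (j + 1 - i)).map fun l => b g (i + l)).prod

/-- `B^h_{0,1} = b_1 b_2 ⋯ b_h`. -/
def B01 (g h : ℕ) : F g := prodb g 1 h

/-- `B^h_{0,2} = b_1 b_2 ⋯ b_h · c_h a_{h+1}`. -/
def B02 (g h : ℕ) : F g := prodb g 1 h * c g h * a g (h + 1)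

/-- `B^h_{0,s}` for `s = 1, 2`. -/
def B0 (g s h : ℕ) : F g := if s = 1 then B01 g h else B02 g h

/-- `B^h_{2k-1} = a_k · b_k b_{k+1} ⋯ b_{h+1-k} · c_{h+1-k} a_{h+1-k}`. -/
def Bodd (g h k : ℕ) : F g :=
  a g k * prodb g k (h + 1 - k) * c g (h + 1 - k) * a g (h + 1 - k)

/-- `B^h_{2k} = a_k · b_{k+1} b_{k+2} ⋯ b_{h-k} · c_{h-k} a_{h+1-k}`. -/
def Beven (g h k : ℕ) : F g :=
  a g k * prodb g (k + 1) (h - k) * c g (h - k) * a g (h + 1 - k)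

/-- The set of words `ℬ^h_s`: it consists of `B^h_{0,s}, B^h_1, …, B^h_h` (the odd-indexed
`B^h_{2k-1}` for `2k - 1 ≤ h` and the even-indexed `B^h_{2k}` for `2k ≤ h`), together with
`a_{r+1}` and `c_r a_{r+1}` when `h = 2r + 1` is odd. -/
def Bset (g s h : ℕ) : Set (F g) :=
  {B0 g s h}
    ∪ {w | ∃ k, 1 ≤ k ∧ 2 * k - 1 ≤ h ∧ w = Bodd g h k}
    ∪ {w | ∃ k, 1 ≤ k ∧ 2 * k ≤ h ∧ w = Beven g h k}
    ∪ (if h % 2 = 1 then {a g (h / 2 + 1), c g (h / 2) * a g (h / 2 + 1)} else (∅ : Set (F g)))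

/-- The genus-`g` surface group `π_g`, presented with generators `a_1, b_1, …, a_g, b_g`
and the single relator `c_g`. -/
abbrev pi (g : ℕ) := PresentedGroup ({c g g} : Set (F g))

/-- The natural projection `F_g → π_g`. -/
abbrev toPi (g : ℕ) : F g →* pi g := PresentedGroup.mk _

/-- The quotient of `π_g` by the normal closure of the images of a set `S` of words. -/
abbrev quotBy (g : ℕ) (S : Set (F g)) :=
  pi g ⧸ Subgroup.normalClosure (toPi g '' S)

/-- The projection `π_g → π_g / N(S)`. -/
abbrev projBy (g : ℕ) (S : Set (F g)) : pi g →* quotBy g S :=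
  QuotientGroup.mk' _

/-!
Write `Y_k = b_k ⋯ b_{g+1-k} · c_{g+1-k}` (`Bmid g g k`), so that `B^g_{2k-1} = a_k Y_k a_{g+1-k}` and
`B^g_{2k} = a_k Y_{k+1} a_{g+1-k}`. Both words die in `G_1`, hence `Y_{k+1} = Y_k` there, while
`Y_1 = B^g_{0,1} c_g = 1`. So every `Y_{k+1}` is trivial and `B^g_{2k} = 1` becomes
`a_k a_{g+1-k} = 1`.
-/

def Bmid (g h k : ℕ) : F g := prodb g k (h + 1 - k) * c g (h + 1 - k)

lemma Bodd_eq (g h k : ℕ) : Bodd g h k = a g k * Bmid g h k * a g (h + 1 - k) := by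
  simp only [Bodd, Bmid, mul_assoc]

lemma Beven_eq (g h k : ℕ) : Beven g h k = a g k * Bmid g h (k + 1) * a g (h + 1 - k) := by
  simp only [Beven, Bmid, Nat.add_sub_add_right, mul_assoc]

lemma Bmid_one (g h : ℕ) : Bmid g h 1 = B01 g h * c g h := by
  simp only [Bmid, B01, Nat.add_sub_cancel]

lemma Bodd_mem_Bset {g s h k : ℕ} (hk : 1 ≤ k) (hkh : 2 * k - 1 ≤ h) : Bodd g h k ∈ Bset g s h :=
  Or.inl <| Or.inl <| Or.inr ⟨k, hk, hkh, rfl⟩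

lemma Beven_mem_Bset {g s h k : ℕ} (hk : 1 ≤ k) (hkh : 2 * k ≤ h) : Beven g h k ∈ Bset g s h :=
  Or.inl <| Or.inr ⟨k, hk, hkh, rfl⟩

lemma B0_mem_Bset (g s h : ℕ) : B0 g s h ∈ Bset g s h :=
  Or.inl <| Or.inl <| Or.inl rfl

section KillingBset

variable {g h : ℕ} {G : Type*} [Group G] {ψ : F g →* G}

lemma map_Bmid_succ {s : ℕ} (hψ : ∀ w ∈ Bset g s h, ψ w = 1) {k : ℕ} (hk : 1 ≤ k)
    (hkh : 2 * k ≤ h) : ψ (Bmid g h (k + 1)) = ψ (Bmid g h k) := by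
  have hodd := hψ _ (Bodd_mem_Bset hk (by omega))
  have heven := hψ _ (Beven_mem_Bset hk hkh)
  rw [Bodd_eq, map_mul, map_mul] at hodd
  rw [Beven_eq, map_mul, map_mul] at heven
  exact mul_left_cancel (mul_right_cancel (heven.trans hodd.symm))

lemma map_Bmid_succ_eq_one (hψ : ∀ w ∈ Bset g 1 h, ψ w = 1) (hc : ψ (c g h) = 1) :
    ∀ k, 2 * k ≤ h → ψ (Bmid g h (k + 1)) = 1
  | 0, _ => by
    have hB01 : ψ (B01 g h) = 1 := by simpa [B0] using hψ _ (B0_mem_Bset g 1 h)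
    rw [Bmid_one, map_mul, hB01, hc, one_mul]
  | k + 1, hkh => by
    rw [map_Bmid_succ hψ (Nat.le_add_left 1 k) hkh]
    exact map_Bmid_succ_eq_one hψ hc k (by omega)

lemma map_a_mul_a_eq_one (hψ : ∀ w ∈ Bset g 1 h, ψ w = 1) (hc : ψ (c g h) = 1) {k : ℕ}
    (hk : 1 ≤ k) (hkh : 2 * k ≤ h) : ψ (a g k * a g (h + 1 - k)) = 1 := by
  have heven := hψ _ (Beven_mem_Bset hk hkh)
  rw [Beven_eq, map_mul, map_mul, map_Bmid_succ_eq_one hψ hc k hkh, mul_one] at heven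
  rwa [map_mul]

end KillingBset

theorem G1_ak_inverse_general (r g : ℕ) (hg : g = 2 * r) :
    ∀ k, 1 ≤ k → k ≤ r →
      projBy g (Bset g 1 g) (toPi g (a g k * a g (g + 1 - k))) = 1 := by
  intro k hk hkr
  let ψ := (projBy g (Bset g 1 g)).comp (toPi g)
  have hψ : ∀ w ∈ Bset g 1 g, ψ w = 1 := fun w hw =>
    (QuotientGroup.eq_one_iff _).mpr (Subgroup.subset_normalClosure ⟨w, hw, rfl⟩)
  have hc : ψ (c g g) = 1 := by
    have hrel : toPi g (c g g) = 1 := PresentedGroup.one_of_mem rfl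
    simp only [ψ, MonoidHom.comp_apply, hrel, map_one]
  exact map_a_mul_a_eq_one hψ hc hk (by omega)

/-- For `g = 2r` with `r ≥ 2`, in `G_1 = π_g / N(ℬ^g_1)` the image of the
word `a_k a_{g+1-k}` is trivial for every `1 ≤ k ≤ r`. -/
theorem G1_ak_inverse (r g : ℕ) (hr : 2 ≤ r) (hg : g = 2 * r) :
    ∀ k, 1 ≤ k → k ≤ r →
      projBy g (Bset g 1 g) (toPi g (a g k * a g (g + 1 - k))) = 1 :=
  G1_ak_inverse_general r g hg
end Paper
end

section
/- Let g = 2r with r ≥ 2. The presented group with generators a_1, b_1, …, a_g, b_g and relators c_g, c_r, and, for each 1 ≤ k ≤ r, the words a_k a_{g+1−k}, b_k a_{g+1−k} b_{g+1−k} a_{g+1−k}^{-1}, a_{g+1−k} a_k, and b_{g+1−k} a_{g+1−k}^{-1} b_k a_{g+1−k}, is isomorphic to the genus-r surface group π_r. -/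
namespace Paper

/-- The relators of Statement 7: `c_g`, `c_r`, and for each `1 ≤ k ≤ r` the words
`a_k a_{g+1-k}`, `b_k a_{g+1-k} b_{g+1-k} a_{g+1-k}⁻¹`, `a_{g+1-k} a_k` and
`b_{g+1-k} a_{g+1-k}⁻¹ b_k a_{g+1-k}`. -/
def rels7 (g r : ℕ) : Set (F g) :=
  {c g g, c g r}
    ∪ {w | ∃ k, 1 ≤ k ∧ k ≤ r ∧
        (w = a g k * a g (g + 1 - k) ∨
          w = b g k * a g (g + 1 - k) * b g (g + 1 - k) * (a g (g + 1 - k))⁻¹ ∨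
          w = a g (g + 1 - k) * a g k ∨
          w = b g (g + 1 - k) * (a g (g + 1 - k))⁻¹ * b g k * a g (g + 1 - k))}

/-! Fold the genus-`2r` surface onto the genus-`r` one: `fold` fixes the generators of index
`≤ r` and sends `a_{2r+1-k} ↦ a_k⁻¹`, `b_{2r+1-k} ↦ a_k b_k⁻¹ a_k⁻¹`. It kills the paired
relators outright and fixes `c_r`. Writing `c_r = Q P` with `Q = b_r⁻¹ ⋯ b_1⁻¹` and
`P = ∏ a_k b_k a_k⁻¹`, the upper halves of both products in `c_{2r}` fold to `P Q`, so
`c_{2r}` folds to `(P Q)²`, a conjugate of `c_r²`. Hence `fold` and the inclusion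
`F_r → F_{2r}` induce maps between the two groups; they are inverse because the paired relators
say precisely that every generator of index `> r` equals the inclusion of its fold. -/

end Paper

namespace PresentedGroup

variable {α β : Type*} {R : Set (FreeGroup α)} {S : Set (FreeGroup β)}

def mapOfMkEqOne (f : FreeGroup α →* FreeGroup β) (hf : ∀ w ∈ R, mk S (f w) = 1) :
    PresentedGroup R →* PresentedGroup S :=
  QuotientGroup.lift _ ((mk S).comp f) (Subgroup.normalClosure_le_normal hf)

def mulEquivOfMaps (f : FreeGroup α →* FreeGroup β) (e : FreeGroup β →* FreeGroup α)
    (hf : ∀ w ∈ R, mk S (f w) = 1) (he : ∀ w ∈ S, mk R (e w) = 1)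
    (hef : ∀ x, mk R (e (f (.of x))) = mk R (.of x))
    (hfe : ∀ y, mk S (f (e (.of y))) = mk S (.of y)) :
    PresentedGroup R ≃* PresentedGroup S :=
  MonoidHom.toMulEquiv (mapOfMkEqOne f hf) (mapOfMkEqOne e he) (ext hef) (ext hfe)

end PresentedGroup

lemma List.range_two_mul (n : ℕ) :
    List.range (2 * n) = List.range n ++ (List.range n).map (n + ·) := by
  rw [two_mul, List.range_add]

lemma List.map_reverse_range_sub (n : ℕ) :
    (List.range n).reverse.map (n - ·) = (List.range n).map (· + 1) := by
  have h := @List.reverse_range' 1 n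
  rw [Nat.add_sub_cancel_left] at h
  rw [List.map_reverse, ← h, List.reverse_reverse, List.range'_eq_map_range]
  simp only [Nat.add_comm 1]

lemma List.map_range_sub (n : ℕ) :
    (List.range n).map (n - ·) = (List.range n).reverse.map (· + 1) := by
  simpa only [List.map_reverse, List.reverse_reverse] using
    congrArg List.reverse (List.map_reverse_range_sub n)

lemma List.prod_map_reverse_range_sub {M : Type*} [Monoid M] (f : ℕ → M) (n : ℕ) :
    ((List.range n).reverse.map fun j => f (n - j)).prod
      = ((List.range n).map fun j => f (j + 1)).prod := by
  have h := congrArg (fun l => (l.map f).prod) (List.map_reverse_range_sub n)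
  simp only [List.map_map] at h
  exact h

lemma List.prod_map_range_sub {M : Type*} [Monoid M] (f : ℕ → M) (n : ℕ) :
    ((List.range n).map fun j => f (n - j)).prod
      = ((List.range n).reverse.map fun j => f (j + 1)).prod := by
  have h := congrArg (fun l => (l.map f).prod) (List.map_range_sub n)
  simp only [List.map_map] at h
  exact h

namespace Paper

lemma a_succ_eq_of (g : ℕ) (i : Fin g) : a g (i + 1) = FreeGroup.of (i, false) := by
  simp [a]

lemma b_succ_eq_of (g : ℕ) (i : Fin g) : b g (i + 1) = FreeGroup.of (i, true) := by
  simp [b]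

def bInvProd (g m : ℕ) : F g :=
  ((List.range m).reverse.map fun j => (b g (j + 1))⁻¹).prod

def conjProd (g m : ℕ) : F g :=
  ((List.range m).map fun j => a g (j + 1) * b g (j + 1) * (a g (j + 1))⁻¹).prod

lemma c_eq_bInvProd_mul_conjProd (g m : ℕ) : c g m = bInvProd g m * conjProd g m :=
  rfl

def incl (r g : ℕ) : F r →* F g :=
  FreeGroup.lift fun x => if x.2 then b g (x.1 + 1) else a g (x.1 + 1)

section incl

variable {r g i m : ℕ}

lemma incl_a (h1 : 1 ≤ i) (h2 : i ≤ r) : incl r g (a r i) = a g i := by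
  rw [a, dif_pos ⟨h1, h2⟩, incl, FreeGroup.lift_apply_of]
  simp only [Bool.false_eq_true, if_false]
  congr 1
  omega

lemma incl_b (h1 : 1 ≤ i) (h2 : i ≤ r) : incl r g (b r i) = b g i := by
  rw [b, dif_pos ⟨h1, h2⟩, incl, FreeGroup.lift_apply_of]
  simp only [if_true]
  congr 1
  omega

lemma incl_bInvProd (hm : m ≤ r) : incl r g (bInvProd r m) = bInvProd g m := by
  rw [bInvProd, bInvProd, map_list_prod, List.map_map]
  refine congrArg List.prod (List.map_congr_left fun j hj => ?_)
  rw [List.mem_reverse, List.mem_range] at hj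
  simp only [Function.comp_apply, map_inv, incl_b (by omega : 1 ≤ j + 1) (by omega : j + 1 ≤ r)]

lemma incl_conjProd (hm : m ≤ r) : incl r g (conjProd r m) = conjProd g m := by
  rw [conjProd, conjProd, map_list_prod, List.map_map]
  refine congrArg List.prod (List.map_congr_left fun j hj => ?_)
  rw [List.mem_range] at hj
  simp only [Function.comp_apply, map_mul, map_inv,
    incl_a (by omega : 1 ≤ j + 1) (by omega : j + 1 ≤ r),
    incl_b (by omega : 1 ≤ j + 1) (by omega : j + 1 ≤ r)]

lemma incl_c (hm : m ≤ r) : incl r g (c r m) = c g m := by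
  rw [c_eq_bInvProd_mul_conjProd, c_eq_bInvProd_mul_conjProd, map_mul, incl_bInvProd hm,
    incl_conjProd hm]

end incl

-- `x.1 + 1` is the index of the generator `x`, so `2 * r - x.1` is the `k` with
-- `x.1 + 1 = 2r + 1 - k`.
def fold (r : ℕ) : F (2 * r) →* F r :=
  FreeGroup.lift fun x =>
    if (x.1 : ℕ) < r then (if x.2 then b r (x.1 + 1) else a r (x.1 + 1))
    else if x.2 then a r (2 * r - x.1) * (b r (2 * r - x.1))⁻¹ * (a r (2 * r - x.1))⁻¹
    else (a r (2 * r - x.1))⁻¹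

section fold

variable {r i k : ℕ}

lemma fold_a (h1 : 1 ≤ i) (h2 : i ≤ r) : fold r (a (2 * r) i) = a r i := by
  rw [a, dif_pos ⟨h1, by omega⟩, fold, FreeGroup.lift_apply_of]
  simp only [Bool.false_eq_true, if_false, if_pos (show i - 1 < r by omega)]
  congr 1
  omega

lemma fold_b (h1 : 1 ≤ i) (h2 : i ≤ r) : fold r (b (2 * r) i) = b r i := by
  rw [b, dif_pos ⟨h1, by omega⟩, fold, FreeGroup.lift_apply_of]
  simp only [if_true, if_pos (show i - 1 < r by omega)]
  congr 1
  omega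

lemma fold_a_reflect (h1 : 1 ≤ k) (h2 : k ≤ r) :
    fold r (a (2 * r) (2 * r + 1 - k)) = (a r k)⁻¹ := by
  rw [a, dif_pos ⟨by omega, by omega⟩, fold, FreeGroup.lift_apply_of]
  simp only [Bool.false_eq_true, if_false, if_neg (show ¬ 2 * r + 1 - k - 1 < r by omega),
    show 2 * r - (2 * r + 1 - k - 1) = k by omega]

lemma fold_b_reflect (h1 : 1 ≤ k) (h2 : k ≤ r) :
    fold r (b (2 * r) (2 * r + 1 - k)) = a r k * (b r k)⁻¹ * (a r k)⁻¹ := by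
  rw [b, dif_pos ⟨by omega, by omega⟩, fold, FreeGroup.lift_apply_of]
  simp only [if_true, if_neg (show ¬ 2 * r + 1 - k - 1 < r by omega),
    show 2 * r - (2 * r + 1 - k - 1) = k by omega]

end fold

lemma fold_incl (r : ℕ) (w : F r) : fold r (incl r (2 * r) w) = w := by
  suffices h : (fold r).comp (incl r (2 * r)) = MonoidHom.id (F r) from
    DFunLike.congr_fun h w
  refine FreeGroup.ext_hom _ _ fun ⟨j, s⟩ => ?_
  cases s
  · rw [MonoidHom.comp_apply, ← a_succ_eq_of, incl_a (by omega) j.isLt, fold_a (by omega) j.isLt]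
    rfl
  · rw [MonoidHom.comp_apply, ← b_succ_eq_of, incl_b (by omega) j.isLt, fold_b (by omega) j.isLt]
    rfl

lemma fold_bInvProd (r : ℕ) :
    fold r (bInvProd (2 * r) (2 * r)) = conjProd r r * bInvProd r r := by
  rw [bInvProd, List.range_two_mul, List.reverse_append, List.map_append, List.prod_append,
    map_mul]
  congr 1
  · rw [← List.map_reverse, List.map_map, map_list_prod, List.map_map]
    refine (congrArg List.prod (List.map_congr_left fun j hj => ?_)).trans
      (List.prod_map_reverse_range_sub (fun i => a r i * b r i * (a r i)⁻¹) r)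
    rw [List.mem_reverse, List.mem_range] at hj
    simp only [Function.comp_apply, map_inv]
    rw [show r + j + 1 = 2 * r + 1 - (r - j) by omega, fold_b_reflect (by omega) (by omega)]
    group
  · rw [← bInvProd, ← incl_bInvProd le_rfl, fold_incl]

lemma fold_conjProd (r : ℕ) :
    fold r (conjProd (2 * r) (2 * r)) = conjProd r r * bInvProd r r := by
  rw [conjProd, List.range_two_mul, List.map_append, List.prod_append, map_mul]
  congr 1
  · rw [← conjProd, ← incl_conjProd le_rfl, fold_incl]
  · rw [List.map_map, map_list_prod, List.map_map]
    refine (congrArg List.prod (List.map_congr_left fun j hj => ?_)).trans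
      (List.prod_map_range_sub (fun i => (b r i)⁻¹) r)
    rw [List.mem_range] at hj
    simp only [Function.comp_apply, map_mul, map_inv]
    rw [show r + j + 1 = 2 * r + 1 - (r - j) by omega, fold_a_reflect (by omega) (by omega),
      fold_b_reflect (by omega) (by omega)]
    group

lemma fold_c (r : ℕ) :
    fold r (c (2 * r) (2 * r)) = (conjProd r r * bInvProd r r) ^ 2 := by
  rw [c_eq_bInvProd_mul_conjProd, map_mul, fold_bInvProd, fold_conjProd, sq]

lemma toPi_conjProd_mul_bInvProd (r : ℕ) : toPi r (conjProd r r * bInvProd r r) = 1 := by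
  have hc : toPi r (bInvProd r r * conjProd r r) = 1 := PresentedGroup.one_of_mem rfl
  calc toPi r (conjProd r r * bInvProd r r)
      = toPi r (conjProd r r) * toPi r (bInvProd r r * conjProd r r)
          * (toPi r (conjProd r r))⁻¹ := by
        simp only [map_mul]
        group
    _ = 1 := by rw [hc, mul_one, mul_inv_cancel]

lemma toPi_fold_rels7 (r : ℕ) : ∀ w ∈ rels7 (2 * r) r, toPi r (fold r w) = 1 := by
  rintro w ((rfl | rfl) | ⟨k, hk1, hk2, rfl | rfl | rfl | rfl⟩)
  · rw [fold_c, map_pow, toPi_conjProd_mul_bInvProd, one_pow]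
  · rw [← incl_c (g := 2 * r) le_rfl, fold_incl]
    exact PresentedGroup.one_of_mem rfl
  all_goals
    simp only [map_mul, map_inv, fold_a hk1 hk2, fold_b hk1 hk2, fold_a_reflect hk1 hk2,
      fold_b_reflect hk1 hk2]
    group

section rels7

variable {r k : ℕ}

local notation "mk₇" => PresentedGroup.mk (rels7 (2 * r) r)

lemma mk_a_reflect (hk1 : 1 ≤ k) (hk2 : k ≤ r) :
    mk₇ (a (2 * r) (2 * r + 1 - k)) = (mk₇ (a (2 * r) k))⁻¹ := by
  refine eq_inv_of_mul_eq_one_right ?_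
  rw [← map_mul]
  exact PresentedGroup.one_of_mem (Or.inr ⟨k, hk1, hk2, Or.inl rfl⟩)

lemma mk_b_reflect (hk1 : 1 ≤ k) (hk2 : k ≤ r) :
    mk₇ (b (2 * r) (2 * r + 1 - k))
      = mk₇ (a (2 * r) k * (b (2 * r) k)⁻¹ * (a (2 * r) k)⁻¹) := by
  have h : mk₇ (b (2 * r) (2 * r + 1 - k) * (a (2 * r) (2 * r + 1 - k))⁻¹ * b (2 * r) k
      * a (2 * r) (2 * r + 1 - k)) = 1 :=
    PresentedGroup.one_of_mem (Or.inr ⟨k, hk1, hk2, Or.inr (Or.inr (Or.inr rfl))⟩)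
  simp only [map_mul, map_inv, mk_a_reflect hk1 hk2, inv_inv] at h ⊢
  rw [mul_assoc, mul_assoc, mul_eq_one_iff_eq_inv] at h
  rw [h]
  group

lemma mk_incl_fold_of (x : Fin (2 * r) × Bool) :
    mk₇ (incl r (2 * r) (fold r (.of x))) = mk₇ (.of x) := by
  obtain ⟨j, s⟩ := x
  by_cases hj : (j : ℕ) < r
  · cases s
    · rw [← a_succ_eq_of, fold_a (by omega) hj, incl_a (by omega) hj]
    · rw [← b_succ_eq_of, fold_b (by omega) hj, incl_b (by omega) hj]
  · have hk1 : 1 ≤ 2 * r - j := by omega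
    have hk2 : 2 * r - j ≤ r := by omega
    have hj' : (j : ℕ) + 1 = 2 * r + 1 - (2 * r - j) := by omega
    cases s
    · rw [← a_succ_eq_of, hj', fold_a_reflect hk1 hk2, map_inv, incl_a hk1 hk2, map_inv,
        mk_a_reflect hk1 hk2]
    · rw [← b_succ_eq_of, hj', fold_b_reflect hk1 hk2, mk_b_reflect hk1 hk2]
      simp only [map_mul, map_inv, incl_a hk1 hk2, incl_b hk1 hk2]

lemma mk_incl_c : ∀ w ∈ ({c r r} : Set (F r)), mk₇ (incl r (2 * r) w) = 1 := by
  rintro w rfl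
  rw [incl_c le_rfl]
  exact PresentedGroup.one_of_mem (Or.inl (Or.inr rfl))

end rels7

theorem presentation_iso_genus_r_general (r g : ℕ) (hg : g = 2 * r) :
    Nonempty (PresentedGroup (rels7 g r) ≃* pi r) := by
  subst hg
  exact ⟨PresentedGroup.mulEquivOfMaps (fold r) (incl r (2 * r)) (toPi_fold_rels7 r)
    mk_incl_c mk_incl_fold_of fun y => by rw [fold_incl]⟩

/-- For `g = 2r` with `r ≥ 2`, the group presented with generators
`a_1, b_1, …, a_g, b_g` and relators `c_g`, `c_r` and, for each `1 ≤ k ≤ r`, the words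
`a_k a_{g+1-k}`, `b_k a_{g+1-k} b_{g+1-k} a_{g+1-k}⁻¹`, `a_{g+1-k} a_k` and
`b_{g+1-k} a_{g+1-k}⁻¹ b_k a_{g+1-k}`, is isomorphic to the genus-`r` surface group `π_r`. -/
theorem presentation_iso_genus_r (r g : ℕ) (hr : 2 ≤ r) (hg : g = 2 * r) :
    Nonempty (PresentedGroup (rels7 g r) ≃* pi r) :=
  presentation_iso_genus_r_general r g hg

end Paper
end

section
/- Let g = 2r with r ≥ 2. The group G_1 = π_g / N(ℬ^g_1) is isomorphic to the genus-r surface group π_r. -/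
namespace Paper

section Words

variable {G H : Type*} [Group G] [Group H]

/-- generic product word `B i * B (i+1) * ... * B j` -/
def pw (B : ℕ → G) (i j : ℕ) : G := ((List.range (j + 1 - i)).map fun l => B (i + l)).prod

/-- generic word `(A 1 * B 1 * (A 1)⁻¹) ⋯ (A m * B m * (A m)⁻¹)` -/
def qw (A B : ℕ → G) (m : ℕ) : G :=
  ((List.range m).map fun j => A (j + 1) * B (j + 1) * (A (j + 1))⁻¹).prod

/-- generic `c` word -/
def cw (A B : ℕ → G) (m : ℕ) : G :=
  (((List.range m).reverse.map fun j => (B (j + 1))⁻¹).prod) *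
    (((List.range m).map fun j => A (j + 1) * B (j + 1) * (A (j + 1))⁻¹).prod)

lemma pw_eq_range (B : ℕ → G) (m : ℕ) : pw B 1 m = ((List.range m).map fun j => B (j + 1)).prod := by
  unfold pw
  congr 1
  · simp only [Nat.add_sub_cancel]
    exact List.map_congr_left (fun l _ => by rw [Nat.add_comm])

lemma rev_inv_prod (B : ℕ → G) (m : ℕ) :
    (((List.range m).reverse.map fun j => (B (j + 1))⁻¹).prod) = (pw B 1 m)⁻¹ := by
  rw [pw_eq_range, List.prod_inv_reverse]
  congr 1
  rw [List.map_reverse, List.map_map]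
  rfl

lemma cw_eq (A B : ℕ → G) (m : ℕ) : cw A B m = (pw B 1 m)⁻¹ * qw A B m := by
  rw [cw, rev_inv_prod]; rfl

lemma pw_empty (B : ℕ → G) {i j : ℕ} (h : j + 1 ≤ i) : pw B i j = 1 := by
  unfold pw
  rw [Nat.sub_eq_zero_of_le h]
  simp

lemma pw_cons (B : ℕ → G) {i j : ℕ} (h : i ≤ j) : pw B i j = B i * pw B (i + 1) j := by
  unfold pw
  have h1 : j + 1 - i = (j + 1 - (i + 1)) + 1 := by omega
  rw [h1, List.range_succ_eq_map, List.map_cons, List.prod_cons, List.map_map]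
  congr 1
  refine congrArg List.prod (List.map_congr_left fun l _ => ?_)
  show B (i + (l + 1)) = B (i + 1 + l)
  congr 1
  omega

lemma pw_snoc (B : ℕ → G) {i j : ℕ} (h0 : 1 ≤ i) (h : i ≤ j) : pw B i j = pw B i (j - 1) * B j := by
  unfold pw
  have h1 : j + 1 - i = (j - 1 + 1 - i) + 1 := by omega
  rw [h1, List.range_succ]
  simp only [List.map_append, List.prod_append, List.map_cons, List.map_nil, List.prod_cons,
    List.prod_nil, mul_one]
  congr 1
  congr 1
  omega

lemma pw_append (B : ℕ → G) {i k j : ℕ} (h0 : 1 ≤ i) (h1 : i ≤ k + 1) (h2 : k ≤ j) :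
    pw B i j = pw B i k * pw B (k + 1) j := by
  induction j with
  | zero =>
      have hk : k = 0 := by omega
      subst hk
      rw [pw_empty B (le_refl _), mul_one]
  | succ n ih =>
      rcases Nat.lt_or_ge k (n + 1) with hk | hk
      · have hkn : k ≤ n := by omega
        rw [pw_snoc B (i := i) (j := n + 1) h0 (by omega),
          pw_snoc B (i := k + 1) (j := n + 1) (by omega) (by omega)]
        simp only [Nat.add_sub_cancel]
        rw [ih hkn, mul_assoc]
      · have hk' : k = n + 1 := by omega
        subst hk'
        rw [pw_empty B (le_refl _), mul_one]

lemma qw_succ (A B : ℕ → G) (m : ℕ) :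
    qw A B (m + 1) = qw A B m * (A (m + 1) * B (m + 1) * (A (m + 1))⁻¹) := by
  unfold qw
  rw [List.range_succ]
  simp

lemma cw_succ (A B : ℕ → G) (m : ℕ) :
    cw A B (m + 1) = (B (m + 1))⁻¹ * cw A B m * (A (m + 1) * B (m + 1) * (A (m + 1))⁻¹) := by
  unfold cw
  rw [List.range_succ]
  simp only [List.reverse_append, List.reverse_cons, List.reverse_nil, List.nil_append,
    List.cons_append, List.map_cons, List.map_append, List.prod_cons, List.prod_append,
    List.map_nil, List.prod_nil, mul_one]
  group

lemma map_pw (f : G →* H) (B : ℕ → G) (i j : ℕ) : f (pw B i j) = pw (fun n => f (B n)) i j := by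
  unfold pw
  rw [map_list_prod, List.map_map]
  rfl

lemma map_qw (f : G →* H) (A B : ℕ → G) (m : ℕ) :
    f (qw A B m) = qw (fun n => f (A n)) (fun n => f (B n)) m := by
  unfold qw
  rw [map_list_prod, List.map_map]
  congr 1
  exact List.map_congr_left (fun l _ => by simp)

lemma map_cw (f : G →* H) (A B : ℕ → G) (m : ℕ) :
    f (cw A B m) = cw (fun n => f (A n)) (fun n => f (B n)) m := by
  unfold cw
  rw [map_mul, map_list_prod, map_list_prod, List.map_map, List.map_map]
  congr 1
  · congr 1
    exact List.map_congr_left (fun l _ => by simp)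
  · congr 1
    exact List.map_congr_left (fun l _ => by simp)

lemma pw_congr {B B' : ℕ → G} {i j : ℕ} (h : ∀ l, i ≤ l → l ≤ j → B l = B' l) :
    pw B i j = pw B' i j := by
  unfold pw
  congr 1
  refine List.map_congr_left (fun l hl => ?_)
  rw [List.mem_range] at hl
  exact h _ (by omega) (by omega)

lemma qw_congr {A A' B B' : ℕ → G} {m : ℕ} (hA : ∀ l, 1 ≤ l → l ≤ m → A l = A' l)
    (hB : ∀ l, 1 ≤ l → l ≤ m → B l = B' l) : qw A B m = qw A' B' m := by
  unfold qw
  congr 1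
  refine List.map_congr_left (fun l hl => ?_)
  rw [List.mem_range] at hl
  rw [hA _ (by omega) (by omega), hB _ (by omega) (by omega)]

lemma cw_congr {A A' B B' : ℕ → G} {m : ℕ} (hA : ∀ l, 1 ≤ l → l ≤ m → A l = A' l)
    (hB : ∀ l, 1 ≤ l → l ≤ m → B l = B' l) : cw A B m = cw A' B' m := by
  unfold cw
  congr 1
  · congr 1
    refine List.map_congr_left (fun l hl => ?_)
    rw [List.mem_reverse, List.mem_range] at hl
    rw [hB _ (by omega) (by omega)]
  · congr 1
    refine List.map_congr_left (fun l hl => ?_)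
    rw [List.mem_range] at hl
    rw [hA _ (by omega) (by omega), hB _ (by omega) (by omega)]

end Words

section Hats

lemma c_eq_cw (g m : ℕ) : c g m = cw (a g) (b g) m := rfl

lemma prodb_eq_pw (g i j : ℕ) : prodb g i j = pw (b g) i j := rfl

lemma a_eq_one {g i : ℕ} (h : ¬ (1 ≤ i ∧ i ≤ g)) : a g i = 1 := dif_neg h

lemma b_eq_one {g i : ℕ} (h : ¬ (1 ≤ i ∧ i ≤ g)) : b g i = 1 := dif_neg h

variable (r : ℕ)

/-- image of `b_i` under the retraction, as an element of `F r`. -/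
def bhat (i : ℕ) : F r :=
  if i ≤ r then b r i
  else a r (2 * r + 1 - i) * (b r (2 * r + 1 - i))⁻¹ * (a r (2 * r + 1 - i))⁻¹

lemma bhat_le {i : ℕ} (h : i ≤ r) : bhat r i = b r i := if_pos h

lemma bhat_gt {i : ℕ} (h : r < i) :
    bhat r i = a r (2 * r + 1 - i) * (b r (2 * r + 1 - i))⁻¹ * (a r (2 * r + 1 - i))⁻¹ :=
  if_neg (by omega)

/-- value of `ahat i` given the list `l` of previous values `ahat 1, …, ahat (i-1)`. -/
def ahatVal (l : List (F r)) (i : ℕ) : F r :=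
  if i ≤ r then a r i
  else if i ≤ 2 * r then
    (cw (fun j => l.getD (j - 1) 1) (bhat r) (i - 1))⁻¹ *
      (pw (bhat r) (2 * r + 2 - i) (i - 1))⁻¹ * (a r (2 * r + 1 - i))⁻¹
  else 1

/-- list of values `ahat 1, …, ahat n`. -/
def ahatList : ℕ → List (F r)
  | 0 => []
  | n + 1 => ahatList n ++ [ahatVal r (ahatList n) (n + 1)]

/-- image of `a_i` under the retraction. -/
def ahat (i : ℕ) : F r := ahatVal r (ahatList r (i - 1)) i

lemma ahatList_length (n : ℕ) : (ahatList r n).length = n := by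
  induction n with
  | zero => rfl
  | succ n ih => simp [ahatList, ih]

lemma ahatList_getD {j n : ℕ} (h : j < n) : (ahatList r n).getD j 1 = ahat r (j + 1) := by
  induction n with
  | zero => omega
  | succ n ih =>
      rcases Nat.lt_or_ge j n with hj | hj
      · rw [ahatList, List.getD_append _ _ _ _ (by rw [ahatList_length]; exact hj)]
        exact ih hj
      · have hj' : j = n := by omega
        subst hj'
        rw [ahatList, List.getD_eq_getElem?_getD, List.getElem?_append_right (by rw [ahatList_length])]
        simp [ahatList_length, ahat]

lemma ahat_le {i : ℕ} (h : i ≤ r) : ahat r i = a r i := by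
  rw [ahat, ahatVal, if_pos h]

lemma ahat_gt2 {i : ℕ} (h : 2 * r < i) : ahat r i = 1 := by
  rw [ahat, ahatVal, if_neg (by omega), if_neg (by omega)]

/-- the `c`-word evaluated at the hats. -/
def chat (m : ℕ) : F r := cw (ahat r) (bhat r) m

lemma ahat_spec {i : ℕ} (h1 : r < i) (h2 : i ≤ 2 * r) :
    ahat r i = (chat r (i - 1))⁻¹ * (pw (bhat r) (2 * r + 2 - i) (i - 1))⁻¹ *
      (a r (2 * r + 1 - i))⁻¹ := by
  rw [ahat, ahatVal, if_neg (by omega), if_pos h2, chat]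
  have : cw (fun j => (ahatList r (i - 1)).getD (j - 1) 1) (bhat r) (i - 1) =
      cw (ahat r) (bhat r) (i - 1) := by
    refine cw_congr (fun l hl1 hl2 => ?_) (fun _ _ _ => rfl)
    rw [ahatList_getD r (by omega : l - 1 < i - 1)]
    congr 1
    omega
  rw [this]

/-- the retraction `F (2r) → F r`. -/
def phi : F (2 * r) →* F r :=
  FreeGroup.lift fun p => cond p.2 (bhat r (p.1.1 + 1)) (ahat r (p.1.1 + 1))

lemma phi_a (i : ℕ) : phi r (a (2 * r) i) = ahat r i := by
  by_cases h : 1 ≤ i ∧ i ≤ 2 * r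
  · rw [a, dif_pos h, phi, FreeGroup.lift_apply_of]
    show ahat r (i - 1 + 1) = ahat r i
    congr 1
    omega
  · rw [a_eq_one h, map_one]
    rcases Nat.lt_or_ge (2 * r) i with hi | hi
    · rw [ahat_gt2 r hi]
    · have : i = 0 := by omega
      subst this
      rw [ahat_le r (by omega), a_eq_one (by omega)]

lemma phi_b (i : ℕ) : phi r (b (2 * r) i) = bhat r i := by
  by_cases h : 1 ≤ i ∧ i ≤ 2 * r
  · rw [b, dif_pos h, phi, FreeGroup.lift_apply_of]
    show bhat r (i - 1 + 1) = bhat r i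
    congr 1
    omega
  · rw [b_eq_one h, map_one]
    rcases Nat.lt_or_ge (2 * r) i with hi | hi
    · rw [bhat_gt r (by omega)]
      have h0 : 2 * r + 1 - i = 0 := by omega
      rw [h0, a_eq_one (by omega), b_eq_one (by omega)]
      group
    · have : i = 0 := by omega
      subst this
      rw [bhat_le r (by omega), b_eq_one (by omega)]

lemma phi_c (m : ℕ) : phi r (c (2 * r) m) = chat r m := by
  rw [c_eq_cw, map_cw, chat]
  exact cw_congr (fun l _ _ => phi_a r l) (fun l _ _ => phi_b r l)

lemma phi_pw (i j : ℕ) : phi r (prodb (2 * r) i j) = pw (bhat r) i j := by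
  rw [prodb_eq_pw, map_pw]
  exact pw_congr (fun l _ _ => phi_b r l)

end Hats

section PhiRel

variable (r : ℕ)

lemma chat_succ (m : ℕ) : chat r (m + 1) =
    (bhat r (m + 1))⁻¹ * chat r m * (ahat r (m + 1) * bhat r (m + 1) * (ahat r (m + 1))⁻¹) :=
  cw_succ _ _ m

lemma chat_low : chat r r = c r r := by
  rw [chat, c_eq_cw]
  exact cw_congr (fun l _ hl => ahat_le r hl) (fun l _ hl => bhat_le r hl)

lemma qw_zero {G : Type*} [Group G] (A B : ℕ → G) : qw A B 0 = 1 := by simp [qw]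

lemma phi_Beven {k : ℕ} (hk1 : 1 ≤ k) (hk2 : k ≤ r) :
    phi r (Beven (2 * r) (2 * r) k) = 1 := by
  unfold Beven
  simp only [map_mul, phi_a, phi_c, phi_pw]
  rw [ahat_spec r (i := 2 * r + 1 - k) (by omega) (by omega)]
  rw [show 2 * r + 1 - k - 1 = 2 * r - k from by omega,
    show 2 * r + 2 - (2 * r + 1 - k) = k + 1 from by omega,
    show 2 * r + 1 - (2 * r + 1 - k) = k from by omega,
    ahat_le r hk2]
  group

lemma phi_Bodd {k : ℕ} (hk1 : 1 ≤ k) (hk2 : k ≤ r) :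
    phi r (Bodd (2 * r) (2 * r) k) = 1 := by
  unfold Bodd
  simp only [map_mul, phi_a, phi_c, phi_pw]
  rw [show 2 * r + 1 - k = (2 * r - k) + 1 from by omega]
  rw [chat_succ r (2 * r - k)]
  rw [ahat_spec r (i := 2 * r - k + 1) (by omega) (by omega)]
  rw [pw_cons (bhat r) (i := k) (j := 2 * r - k + 1) (by omega),
    pw_snoc (bhat r) (i := k + 1) (j := 2 * r - k + 1) (by omega) (by omega)]
  rw [show 2 * r - k + 1 - 1 = 2 * r - k from by omega,
    show 2 * r + 2 - (2 * r - k + 1) = k + 1 from by omega,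
    show 2 * r + 1 - (2 * r - k + 1) = k from by omega,
    bhat_gt r (i := 2 * r - k + 1) (by omega),
    show 2 * r + 1 - (2 * r - k + 1) = k from by omega,
    ahat_le r hk2, bhat_le r hk2]
  group

lemma pw_bhat_high : ∀ m, m ≤ r → pw (bhat r) (2 * r + 1 - m) (2 * r) = (qw (a r) (b r) m)⁻¹ := by
  intro m
  induction m with
  | zero =>
      intro _
      rw [show 2 * r + 1 - 0 = 2 * r + 1 from rfl, pw_empty (bhat r) (le_refl _), qw_zero]
      group
  | succ m ih =>
      intro hm
      rw [show 2 * r + 1 - (m + 1) = 2 * r - m from by omega]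
      rw [pw_cons (bhat r) (i := 2 * r - m) (j := 2 * r) (by omega)]
      rw [show 2 * r - m + 1 = 2 * r + 1 - m from by omega, ih (by omega)]
      rw [bhat_gt r (i := 2 * r - m) (by omega),
        show 2 * r + 1 - (2 * r - m) = m + 1 from by omega, qw_succ]
      group

lemma phi_B01 (hr : 1 ≤ r) :
    phi r (B01 (2 * r) (2 * r)) = pw (b r) 1 r * (c r r)⁻¹ * (pw (b r) 1 r)⁻¹ := by
  rw [B01, phi_pw]
  rw [pw_append (bhat r) (i := 1) (k := r) (j := 2 * r) (le_refl _) (by omega) (by omega)]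
  rw [pw_congr (fun l _ hl => bhat_le r hl)]
  have h2 : pw (bhat r) (r + 1) (2 * r) = (qw (a r) (b r) r)⁻¹ := by
    have := pw_bhat_high r r (le_refl _)
    rwa [show 2 * r + 1 - r = r + 1 from by omega] at this
  rw [h2, c_eq_cw, cw_eq]
  group

lemma toPi_c_self (g : ℕ) : toPi g (c g g) = 1 :=
  (QuotientGroup.eq_one_iff _).mpr
    (Subgroup.subset_normalClosure (Set.mem_singleton _))

lemma toPi_qw (hr : 1 ≤ r) : toPi r (qw (a r) (b r) r) = toPi r (pw (b r) 1 r) := by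
  have h : toPi r ((pw (b r) 1 r)⁻¹ * qw (a r) (b r) r) = 1 := by
    rw [← cw_eq, ← c_eq_cw]
    exact toPi_c_self r
  rw [map_mul, map_inv, inv_mul_eq_one] at h
  exact h.symm

lemma chat_pi : ∀ t k, 1 ≤ k → k + t = r →
    toPi r (chat r (2 * r + 1 - k)) = (toPi r (pw (bhat r) k (2 * r + 1 - k)))⁻¹ := by
  intro t
  induction t with
  | zero =>
      intro k hk1 hk2
      have hr : 1 ≤ r := by omega
      rw [show k = r from by omega]
      rw [show 2 * r + 1 - r = r + 1 from by omega]
      rw [chat_succ r r, chat_low]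
      rw [ahat_spec r (i := r + 1) (by omega) (by omega)]
      rw [show r + 1 - 1 = r from by omega,
        show 2 * r + 2 - (r + 1) = r + 1 from by omega,
        show 2 * r + 1 - (r + 1) = r from by omega]
      rw [pw_empty (bhat r) (i := r + 1) (j := r) (le_refl _)]
      rw [bhat_gt r (i := r + 1) (by omega), show 2 * r + 1 - (r + 1) = r from by omega]
      rw [pw_cons (bhat r) (i := r) (j := r + 1) (by omega),
        pw_cons (bhat r) (i := r + 1) (j := r + 1) (le_refl _),
        pw_empty (bhat r) (i := r + 2) (j := r + 1) (le_refl _)]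
      rw [bhat_le r (le_refl _), bhat_gt r (i := r + 1) (by omega),
        show 2 * r + 1 - (r + 1) = r from by omega, chat_low]
      simp only [map_mul, map_inv, map_one, mul_one]
      rw [toPi_c_self r]
      group
  | succ t ih =>
      intro k hk1 hkt
      have IH := ih (k + 1) (by omega) (by omega)
      rw [show 2 * r + 1 - (k + 1) = 2 * r - k from by omega] at IH
      rw [show 2 * r + 1 - k = (2 * r - k) + 1 from by omega]
      rw [chat_succ r (2 * r - k)]
      rw [ahat_spec r (i := 2 * r - k + 1) (by omega) (by omega)]
      rw [show 2 * r - k + 1 - 1 = 2 * r - k from by omega,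
        show 2 * r + 2 - (2 * r - k + 1) = k + 1 from by omega,
        show 2 * r + 1 - (2 * r - k + 1) = k from by omega]
      rw [pw_cons (bhat r) (i := k) (j := 2 * r - k + 1) (by omega),
        pw_snoc (bhat r) (i := k + 1) (j := 2 * r - k + 1) (by omega) (by omega)]
      rw [show 2 * r - k + 1 - 1 = 2 * r - k from by omega]
      rw [bhat_gt r (i := 2 * r - k + 1) (by omega),
        show 2 * r + 1 - (2 * r - k + 1) = k from by omega,
        bhat_le r (by omega : k ≤ r)]
      simp only [map_mul, map_inv]
      rw [IH]
      group

lemma phi_cgg (hr : 1 ≤ r) : toPi r (chat r (2 * r)) = 1 := by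
  have h := chat_pi r (r - 1) 1 (le_refl _) (by omega)
  rw [show 2 * r + 1 - 1 = 2 * r from by omega] at h
  rw [h]
  rw [pw_append (bhat r) (i := 1) (k := r) (j := 2 * r) (le_refl _) (by omega) (by omega)]
  rw [pw_congr (fun l _ hl => bhat_le r hl)]
  have h2 : pw (bhat r) (r + 1) (2 * r) = (qw (a r) (b r) r)⁻¹ := by
    have := pw_bhat_high r r (le_refl _)
    rwa [show 2 * r + 1 - r = r + 1 from by omega] at this
  rw [h2, map_mul, map_inv, toPi_qw r hr]
  group

end PhiRel

section GSide

variable (r : ℕ)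

/-- the quotient group `G_1`. -/
abbrev GG := quotBy (2 * r) (Bset (2 * r) 1 (2 * r))

/-- the projection `F_(2r) → G_1`. -/
def pr : F (2 * r) →* GG r :=
  (projBy (2 * r) (Bset (2 * r) 1 (2 * r))).comp (toPi (2 * r))

lemma pr_eq_one_of_mem {w : F (2 * r)} (hw : w ∈ Bset (2 * r) 1 (2 * r)) : pr r w = 1 :=
  (QuotientGroup.eq_one_iff _).mpr
    (Subgroup.subset_normalClosure ⟨w, hw, rfl⟩)

lemma memB01 : B01 (2 * r) (2 * r) ∈ Bset (2 * r) 1 (2 * r) := by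
  have h : B0 (2 * r) 1 (2 * r) = B01 (2 * r) (2 * r) := if_pos rfl
  exact Or.inl (Or.inl (Or.inl (by rw [← h]; exact Set.mem_singleton _)))

lemma memBodd {k : ℕ} (hk1 : 1 ≤ k) (hk2 : k ≤ r) :
    Bodd (2 * r) (2 * r) k ∈ Bset (2 * r) 1 (2 * r) :=
  Or.inl (Or.inl (Or.inr ⟨k, hk1, by omega, rfl⟩))

lemma memBeven {k : ℕ} (hk1 : 1 ≤ k) (hk2 : k ≤ r) :
    Beven (2 * r) (2 * r) k ∈ Bset (2 * r) 1 (2 * r) :=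
  Or.inl (Or.inr ⟨k, hk1, by omega, rfl⟩)

lemma mem_Bset_elim {w : F (2 * r)} (hw : w ∈ Bset (2 * r) 1 (2 * r)) :
    w = B01 (2 * r) (2 * r) ∨ (∃ k, 1 ≤ k ∧ k ≤ r ∧ w = Bodd (2 * r) (2 * r) k) ∨
      (∃ k, 1 ≤ k ∧ k ≤ r ∧ w = Beven (2 * r) (2 * r) k) := by
  rcases hw with (((h | h) | h) | h)
  · left
    rw [Set.mem_singleton_iff] at h
    rw [h, B0, if_pos rfl]
  · right; left
    obtain ⟨k, hk1, hk2, hk3⟩ := h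
    exact ⟨k, hk1, by omega, hk3⟩
  · right; right
    obtain ⟨k, hk1, hk2, hk3⟩ := h
    exact ⟨k, hk1, by omega, hk3⟩
  · rw [if_neg (by omega)] at h
    exact absurd h (Set.notMem_empty w)

lemma pr_c_gg : pr r (c (2 * r) (2 * r)) = 1 := by
  show projBy (2 * r) (Bset (2 * r) 1 (2 * r)) (toPi (2 * r) (c (2 * r) (2 * r))) = 1
  rw [toPi_c_self, map_one]

lemma pr_b_high {k : ℕ} (hk1 : 1 ≤ k) (hk2 : k ≤ r) :
    pr r (b (2 * r) (2 * r + 1 - k)) =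
      pr r (a (2 * r) k) * (pr r (b (2 * r) k))⁻¹ * (pr r (a (2 * r) k))⁻¹ := by
  have hE := pr_eq_one_of_mem r (memBeven r hk1 hk2)
  have hO := pr_eq_one_of_mem r (memBodd r hk1 hk2)
  rw [Beven] at hE
  rw [Bodd] at hO
  rw [show 2 * r + 1 - k = (2 * r - k) + 1 from by omega] at hO ⊢
  simp only [prodb_eq_pw, c_eq_cw] at hE hO
  rw [pw_cons (b (2 * r)) (i := k) (j := 2 * r - k + 1) (by omega),
    pw_snoc (b (2 * r)) (i := k + 1) (j := 2 * r - k + 1) (by omega) (by omega),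
    show 2 * r - k + 1 - 1 = 2 * r - k from by omega,
    cw_succ] at hO
  rw [show 2 * r + 1 - k = 2 * r - k + 1 from by omega] at hE
  set A := pr r (a (2 * r) k) with hA
  set Bk := pr r (b (2 * r) k) with hBk
  set B' := pr r (b (2 * r) (2 * r - k + 1)) with hB'
  set Am := pr r (a (2 * r) (2 * r - k + 1)) with hAm
  set X := pr r (pw (b (2 * r)) (k + 1) (2 * r - k)) with hX
  set C := pr r (cw (a (2 * r)) (b (2 * r)) (2 * r - k)) with hC
  simp only [map_mul, map_inv, ← hA, ← hBk, ← hB', ← hAm, ← hX, ← hC] at hE hO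
  have e1 : X * (C * Am) = A⁻¹ := by
    have h2 := congrArg (fun z => A⁻¹ * z) hE
    simpa [mul_assoc] using h2
  have hO' : A * Bk * (X * (C * Am)) * B' = 1 := by
    rw [← hO]
    group
  rw [e1] at hO'
  calc B' = (A * Bk * A⁻¹)⁻¹ * (A * Bk * A⁻¹ * B') := by group
  _ = (A * Bk * A⁻¹)⁻¹ * 1 := by rw [hO']
  _ = A * Bk⁻¹ * A⁻¹ := by group

lemma pr_a_high {k : ℕ} (hk1 : 1 ≤ k) (hk2 : k ≤ r) :
    pr r (a (2 * r) (2 * r + 1 - k)) =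
      (pr r (c (2 * r) (2 * r - k)))⁻¹ * (pr r (prodb (2 * r) (k + 1) (2 * r - k)))⁻¹ *
        (pr r (a (2 * r) k))⁻¹ := by
  have hE := pr_eq_one_of_mem r (memBeven r hk1 hk2)
  rw [Beven] at hE
  set A := pr r (a (2 * r) k) with hA
  set Am := pr r (a (2 * r) (2 * r + 1 - k)) with hAm
  set X := pr r (prodb (2 * r) (k + 1) (2 * r - k)) with hX
  set C := pr r (c (2 * r) (2 * r - k)) with hC
  simp only [map_mul, ← hA, ← hAm, ← hX, ← hC] at hE
  calc Am = (A * X * C)⁻¹ * (A * X * C * Am) := by group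
  _ = (A * X * C)⁻¹ * 1 := by rw [hE]
  _ = C⁻¹ * X⁻¹ * A⁻¹ := by group

lemma pr_pw_high : ∀ m, m ≤ r →
    pr r (pw (b (2 * r)) (2 * r + 1 - m) (2 * r)) =
      (pr r (qw (a (2 * r)) (b (2 * r)) m))⁻¹ := by
  intro m
  induction m with
  | zero =>
      intro _
      rw [show 2 * r + 1 - 0 = 2 * r + 1 from rfl, pw_empty (b (2 * r)) (le_refl _), qw_zero]
      simp
  | succ m ih =>
      intro hm
      rw [show 2 * r + 1 - (m + 1) = 2 * r - m from by omega]
      rw [pw_cons (b (2 * r)) (i := 2 * r - m) (j := 2 * r) (by omega)]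
      rw [show 2 * r - m + 1 = 2 * r + 1 - m from by omega]
      have hb := pr_b_high r (k := m + 1) (by omega) (by omega)
      rw [show 2 * r + 1 - (m + 1) = 2 * r - m from by omega] at hb
      rw [map_mul, hb, ih (by omega), qw_succ, map_mul]
      simp only [map_mul, map_inv]
      group

lemma pr_c_r (hr : 1 ≤ r) : pr r (c (2 * r) r) = 1 := by
  have hB := pr_eq_one_of_mem r (memB01 r)
  rw [B01, prodb_eq_pw,
    pw_append (b (2 * r)) (i := 1) (k := r) (j := 2 * r) (le_refl _) (by omega) (by omega),
    map_mul] at hB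
  have h2 := pr_pw_high r r (le_refl _)
  rw [show 2 * r + 1 - r = r + 1 from by omega] at h2
  rw [h2] at hB
  simp only [c_eq_cw, cw_eq, map_mul, map_inv]
  rw [inv_mul_eq_one]
  rw [mul_inv_eq_one] at hB
  exact hB

/-- `ψ₀ : F r → G_1`. -/
def psi0 : F r →* GG r :=
  FreeGroup.lift fun p =>
    cond p.2 (pr r (b (2 * r) (p.1.1 + 1))) (pr r (a (2 * r) (p.1.1 + 1)))

lemma psi0_a {i : ℕ} (h1 : 1 ≤ i) (h2 : i ≤ r) : psi0 r (a r i) = pr r (a (2 * r) i) := by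
  rw [a, dif_pos ⟨h1, h2⟩, psi0, FreeGroup.lift_apply_of]
  show pr r (a (2 * r) (i - 1 + 1)) = pr r (a (2 * r) i)
  rw [show i - 1 + 1 = i from by omega]

lemma psi0_b {i : ℕ} (h1 : 1 ≤ i) (h2 : i ≤ r) : psi0 r (b r i) = pr r (b (2 * r) i) := by
  rw [b, dif_pos ⟨h1, h2⟩, psi0, FreeGroup.lift_apply_of]
  show pr r (b (2 * r) (i - 1 + 1)) = pr r (b (2 * r) i)
  rw [show i - 1 + 1 = i from by omega]

lemma psi0_crr (hr : 1 ≤ r) : psi0 r (c r r) = 1 := by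
  simp only [c_eq_cw]
  rw [map_cw]
  have h : cw (fun n => psi0 r (a r n)) (fun n => psi0 r (b r n)) r =
      cw (fun n => pr r (a (2 * r) n)) (fun n => pr r (b (2 * r) n)) r :=
    cw_congr (fun l hl1 hl2 => psi0_a r hl1 hl2) (fun l hl1 hl2 => psi0_b r hl1 hl2)
  rw [h, ← map_cw, ← c_eq_cw]
  exact pr_c_r r hr

end GSide

section Assemble

variable (r : ℕ)

/-- `Ψ : π_r → G_1`. -/
def Psi (hr : 1 ≤ r) : pi r →* GG r :=
  PresentedGroup.toGroup
    (f := fun p => cond p.2 (pr r (b (2 * r) (p.1.1 + 1))) (pr r (a (2 * r) (p.1.1 + 1))))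
    (by
      intro w hw
      rw [Set.mem_singleton_iff] at hw
      subst hw
      exact psi0_crr r hr)

lemma Psi_toPi (hr : 1 ≤ r) (u : F r) : Psi r hr (toPi r u) = psi0 r u := by
  have h : (Psi r hr).comp (toPi r) = psi0 r := by
    apply FreeGroup.ext_hom
    intro x
    show Psi r hr (PresentedGroup.of x) = psi0 r (FreeGroup.of x)
    rw [psi0, FreeGroup.lift_apply_of]
    exact PresentedGroup.toGroup.of _
  exact DFunLike.congr_fun h u

/-- `Φ` on the level of `π_{2r}`. -/
def Phi1 (hr : 1 ≤ r) : pi (2 * r) →* pi r :=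
  PresentedGroup.toGroup (f := fun p => toPi r (phi r (FreeGroup.of p)))
    (by
      intro w hw
      rw [Set.mem_singleton_iff] at hw
      subst hw
      have h : FreeGroup.lift (fun p => toPi r (phi r (FreeGroup.of p))) =
          (toPi r).comp (phi r) := by
        apply FreeGroup.ext_hom
        intro x
        rw [FreeGroup.lift_apply_of, MonoidHom.comp_apply]
      rw [h, MonoidHom.comp_apply, phi_c]
      exact phi_cgg r hr)

lemma Phi1_toPi (hr : 1 ≤ r) (w : F (2 * r)) :
    Phi1 r hr (toPi (2 * r) w) = toPi r (phi r w) := by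
  have h : (Phi1 r hr).comp (toPi (2 * r)) = (toPi r).comp (phi r) := by
    apply FreeGroup.ext_hom
    intro x
    show Phi1 r hr (PresentedGroup.of x) = toPi r (phi r (FreeGroup.of x))
    exact PresentedGroup.toGroup.of _
  exact DFunLike.congr_fun h w

lemma Phi1_ker (hr : 1 ≤ r) :
    Subgroup.normalClosure (toPi (2 * r) '' Bset (2 * r) 1 (2 * r)) ≤ (Phi1 r hr).ker := by
  apply Subgroup.normalClosure_le_normal
  rintro x ⟨w, hw, rfl⟩
  rw [SetLike.mem_coe, MonoidHom.mem_ker, Phi1_toPi]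
  rcases mem_Bset_elim r hw with h | ⟨k, hk1, hk2, h⟩ | ⟨k, hk1, hk2, h⟩
  · subst h
    rw [phi_B01 r hr]
    simp only [map_mul, map_inv]
    rw [toPi_c_self]
    group
  · subst h
    rw [phi_Bodd r hk1 hk2, map_one]
  · subst h
    rw [phi_Beven r hk1 hk2, map_one]

/-- `Φ : G_1 → π_r`. -/
def Phi (hr : 1 ≤ r) : GG r →* pi r :=
  QuotientGroup.lift _ (Phi1 r hr) (Phi1_ker r hr)

lemma Phi_pr (hr : 1 ≤ r) (w : F (2 * r)) : Phi r hr (pr r w) = toPi r (phi r w) := by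
  show QuotientGroup.lift _ (Phi1 r hr) (Phi1_ker r hr)
      ((QuotientGroup.mk' _) (toPi (2 * r) w)) = _
  rw [QuotientGroup.mk'_apply, QuotientGroup.lift_mk]
  exact Phi1_toPi r hr w

lemma psi0_bhat {i : ℕ} (h1 : 1 ≤ i) (h2 : i ≤ 2 * r) :
    psi0 r (bhat r i) = pr r (b (2 * r) i) := by
  rcases le_or_gt i r with h | h
  · rw [bhat_le r h]
    exact psi0_b r h1 h
  · rw [bhat_gt r h]
    have h3 := pr_b_high r (k := 2 * r + 1 - i) (by omega) (by omega)
    rw [show 2 * r + 1 - (2 * r + 1 - i) = i from by omega] at h3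
    rw [map_mul, map_mul, map_inv, map_inv,
      psi0_a r (by omega) (by omega), psi0_b r (by omega) (by omega)]
    exact h3.symm

lemma psi0_ahat : ∀ i, 1 ≤ i → i ≤ 2 * r → psi0 r (ahat r i) = pr r (a (2 * r) i) := by
  intro i
  induction i using Nat.strong_induction_on with
  | _ i ih =>
    intro h1 h2
    rcases le_or_gt i r with h | h
    · rw [ahat_le r h]
      exact psi0_a r h1 h
    · rw [ahat_spec r h h2]
      have echat : psi0 r (chat r (i - 1)) = pr r (c (2 * r) (i - 1)) := by
        rw [chat, map_cw]
        have e : cw (fun n => psi0 r (ahat r n)) (fun n => psi0 r (bhat r n)) (i - 1) =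
            cw (fun n => pr r (a (2 * r) n)) (fun n => pr r (b (2 * r) n)) (i - 1) :=
          cw_congr (fun l hl1 hl2 => ih l (by omega) hl1 (by omega))
            (fun l hl1 hl2 => psi0_bhat r hl1 (by omega))
        rw [e, ← map_cw]
        rfl
      have epw : psi0 r (pw (bhat r) (2 * r + 2 - i) (i - 1)) =
          pr r (prodb (2 * r) (2 * r + 2 - i) (i - 1)) := by
        rw [map_pw]
        have e : pw (fun n => psi0 r (bhat r n)) (2 * r + 2 - i) (i - 1) =
            pw (fun n => pr r (b (2 * r) n)) (2 * r + 2 - i) (i - 1) :=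
          pw_congr (fun l hl1 hl2 => psi0_bhat r (by omega) (by omega))
        rw [e, ← map_pw]
        rfl
      have h3 := pr_a_high r (k := 2 * r + 1 - i) (by omega) (by omega)
      rw [show 2 * r + 1 - (2 * r + 1 - i) = i from by omega,
        show 2 * r - (2 * r + 1 - i) = i - 1 from by omega,
        show (2 * r + 1 - i) + 1 = 2 * r + 2 - i from by omega] at h3
      rw [map_mul, map_mul, map_inv, map_inv, map_inv, echat, epw,
        psi0_a r (by omega) (by omega)]
      exact h3.symm

lemma psi0_phi_of (x : Fin (2 * r) × Bool) :
    psi0 r (phi r (FreeGroup.of x)) = pr r (FreeGroup.of x) := by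
  obtain ⟨⟨v, hv⟩, bb⟩ := x
  cases bb
  · have ha : a (2 * r) (v + 1) = FreeGroup.of ((⟨v, hv⟩ : Fin (2 * r)), false) :=
      dif_pos ⟨by omega, by omega⟩
    rw [← ha, phi_a]
    exact psi0_ahat r (v + 1) (by omega) (by omega)
  · have hb : b (2 * r) (v + 1) = FreeGroup.of ((⟨v, hv⟩ : Fin (2 * r)), true) :=
      dif_pos ⟨by omega, by omega⟩
    rw [← hb, phi_b]
    exact psi0_bhat r (by omega) (by omega)

lemma comp1 (hr : 1 ≤ r) : (Phi r hr).comp (Psi r hr) = MonoidHom.id (pi r) := by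
  apply PresentedGroup.ext
  intro x
  show Phi r hr (Psi r hr (PresentedGroup.of x)) = PresentedGroup.of x
  have h1 : Psi r hr (PresentedGroup.of x) = psi0 r (FreeGroup.of x) := by
    rw [psi0, FreeGroup.lift_apply_of]
    exact PresentedGroup.toGroup.of _
  rw [h1, psi0, FreeGroup.lift_apply_of]
  obtain ⟨⟨v, hv⟩, bb⟩ := x
  cases bb
  · show Phi r hr (pr r (a (2 * r) (v + 1))) = _
    rw [Phi_pr, phi_a, ahat_le r (by omega)]
    have ha : a r (v + 1) = FreeGroup.of ((⟨v, hv⟩ : Fin r), false) :=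
      dif_pos ⟨by omega, by omega⟩
    rw [ha]
    rfl
  · show Phi r hr (pr r (b (2 * r) (v + 1))) = _
    rw [Phi_pr, phi_b, bhat_le r (by omega)]
    have hb : b r (v + 1) = FreeGroup.of ((⟨v, hv⟩ : Fin r), true) :=
      dif_pos ⟨by omega, by omega⟩
    rw [hb]
    rfl

lemma comp2 (hr : 1 ≤ r) : (Psi r hr).comp (Phi r hr) = MonoidHom.id (GG r) := by
  apply QuotientGroup.monoidHom_ext
  apply PresentedGroup.ext
  intro x
  show Psi r hr (Phi r hr (pr r (FreeGroup.of x))) = pr r (FreeGroup.of x)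
  rw [Phi_pr, Psi_toPi]
  exact psi0_phi_of r x

/-- the isomorphism `G_1 ≃* π_r`. -/
def theIso (hr : 1 ≤ r) : GG r ≃* pi r :=
  MonoidHom.toMulEquiv (Phi r hr) (Psi r hr) (comp2 r hr) (comp1 r hr)

end Assemble

/-- For `g = 2r` with `r ≥ 2`, the group `G_1 = π_g / N(ℬ^g_1)` is
isomorphic to the genus-`r` surface group `π_r`. -/
theorem G1_iso_genus_r_even (r g : ℕ) (hr : 2 ≤ r) (hg : g = 2 * r) :
    Nonempty (quotBy g (Bset g 1 g) ≃* pi r) := by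
  subst hg
  exact ⟨theIso r (by omega)⟩

end Paper
end
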